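/- (Gap equation.) If r_β > 0 is a maximizer of the variational functional F over [0,∞), then r_β satisfies the Euler–Lagrange (gap) equation G_0(r_β) + G_1(r_β) + G_2(r_β) = 2/γ_s. -/

import Mathlib

open Real Filter

/-- `g_{r,x} := sqrt((x + λ_s − μ_s)² + γ_s²·r)`. -/
noncomputable def gg (gams lams mus r x : ℝ) : ℝ :=
  Real.sqrt ((x + lams - mus) ^ 2 + gams ^ 2 * r)

/-- The function `f` from Theorem 1 of the paper. Parameters:
`beta` = β, `gams` = γ_s, `lams` = λ_s, `lamf` = λ_f, `lam` = λ,
`mus` = μ_s, `muf` = μ_f, `hs` = h_s, `hf` = h_f, `eta` = η. -/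
noncomputable def ff (beta gams lams lamf lam mus muf hs hf eta r : ℝ) : ℝ :=
  (Real.exp (-(beta * muf)) + Real.exp (-(beta * (4 * lam + 2 * lamf - muf))))
      * Real.cosh (beta * hs)
    + Real.exp (-(beta * (2 * lam - hs))) * Real.cosh (beta * (eta + hf))
    + Real.exp (-(beta * (2 * lam + hs))) * Real.cosh (beta * (eta - hf))
    + Real.exp (-(beta * (lams + muf))) * Real.cosh (beta * gg gams lams mus r 0)
    + Real.exp (-(beta * (4 * lam + lams + 2 * lamf - muf)))
      * Real.cosh (beta * gg gams lams mus r (4 * lam))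
    + 2 * Real.exp (-(beta * (2 * lam + lams))) * Real.cosh (beta * hf)
      * Real.cosh (beta * gg gams lams mus r (2 * lam))

/-- The variational functional `F(r) := −γ_s·r + β⁻¹·ln f(r)`. -/
noncomputable def FF (beta gams lams lamf lam mus muf hs hf eta r : ℝ) : ℝ :=
  -(gams * r) + beta⁻¹ * Real.log (ff beta gams lams lamf lam mus muf hs hf eta r)

/-- `G_0`. -/
noncomputable def G0 (beta gams lams lamf lam mus muf hs hf eta r : ℝ) : ℝ :=
  Real.sinh (beta * gg gams lams mus r 0) /
    (ff beta gams lams lamf lam mus muf hs hf eta r * Real.exp (beta * (lams + muf))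
      * gg gams lams mus r 0)

/-- `G_1`. -/
noncomputable def G1 (beta gams lams lamf lam mus muf hs hf eta r : ℝ) : ℝ :=
  2 * Real.cosh (beta * hf) * Real.sinh (beta * gg gams lams mus r (2 * lam)) /
    (ff beta gams lams lamf lam mus muf hs hf eta r * Real.exp (beta * (2 * lam + lams))
      * gg gams lams mus r (2 * lam))

/-- `G_2`. -/
noncomputable def G2 (beta gams lams lamf lam mus muf hs hf eta r : ℝ) : ℝ :=
  Real.sinh (beta * gg gams lams mus r (4 * lam)) /
    (ff beta gams lams lamf lam mus muf hs hf eta r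
      * Real.exp (beta * (4 * lam + lams + 2 * lamf - muf))
      * gg gams lams mus r (4 * lam))

/-!
Fermat's rule at the interior maximizer `r_β` gives `F'(r_β) = 0`. Since
`∂_r g_{r,x} = γ_s² / (2 g_{r,x})`, differentiating the three `cosh (β g_{r,x})` terms of `f`
gives `f' = (β γ_s² / 2) · f · (G_0 + G_1 + G_2)`, hence
`F' = −γ_s + (γ_s² / 2) (G_0 + G_1 + G_2)`, which vanishes exactly when the gap equation holds.
-/

section

variable (beta gams lams lamf lam mus muf hs hf eta : ℝ)

theorem gg_pos {r : ℝ} (hgams : gams ≠ 0) (hr : 0 < r) (x : ℝ) : 0 < gg gams lams mus r x :=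
  Real.sqrt_pos.mpr (by positivity)

theorem hasDerivAt_gg {r x : ℝ} (hg : 0 < gg gams lams mus r x) :
    HasDerivAt (fun r => gg gams lams mus r x) (gams ^ 2 / (2 * gg gams lams mus r x)) r := by
  have hlin : HasDerivAt (fun r : ℝ => (x + lams - mus) ^ 2 + gams ^ 2 * r) (gams ^ 2) r := by
    simpa using ((hasDerivAt_id r).const_mul (gams ^ 2)).const_add ((x + lams - mus) ^ 2)
  exact ((Real.hasDerivAt_sqrt (Real.sqrt_pos.mp hg).ne').comp r hlin).congr_deriv (by
    simp only [gg]; ring)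

theorem hasDerivAt_cosh_mul_gg {r x : ℝ} (hg : 0 < gg gams lams mus r x) :
    HasDerivAt (fun r => Real.cosh (beta * gg gams lams mus r x))
      (beta * gams ^ 2 / 2 * (Real.sinh (beta * gg gams lams mus r x) / gg gams lams mus r x))
      r :=
  ((Real.hasDerivAt_cosh _).comp r ((hasDerivAt_gg gams lams mus hg).const_mul beta)).congr_deriv
    (by field_simp)

theorem ff_pos (r : ℝ) : 0 < ff beta gams lams lamf lam mus muf hs hf eta r := by
  unfold ff
  have := Real.cosh_pos (beta * hs)
  have := Real.cosh_pos (beta * (eta + hf))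
  have := Real.cosh_pos (beta * (eta - hf))
  have := Real.cosh_pos (beta * gg gams lams mus r 0)
  have := Real.cosh_pos (beta * gg gams lams mus r (4 * lam))
  have := Real.cosh_pos (beta * gg gams lams mus r (2 * lam))
  have := Real.cosh_pos (beta * hf)
  positivity

theorem hasDerivAt_ff {r : ℝ} (hgams : gams ≠ 0) (hr : 0 < r) :
    HasDerivAt (fun r => ff beta gams lams lamf lam mus muf hs hf eta r)
      (beta * gams ^ 2 / 2 * ff beta gams lams lamf lam mus muf hs hf eta r *
        (G0 beta gams lams lamf lam mus muf hs hf eta r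
          + G1 beta gams lams lamf lam mus muf hs hf eta r
          + G2 beta gams lams lamf lam mus muf hs hf eta r)) r := by
  have hg := gg_pos gams lams mus hgams hr
  have hf0 := (ff_pos beta gams lams lamf lam mus muf hs hf eta r).ne'
  have d0 := (hasDerivAt_cosh_mul_gg beta gams lams mus (hg 0)).const_mul
    (Real.exp (-(beta * (lams + muf))))
  have d4 := (hasDerivAt_cosh_mul_gg beta gams lams mus (hg (4 * lam))).const_mul
    (Real.exp (-(beta * (4 * lam + lams + 2 * lamf - muf))))
  have d2 := (hasDerivAt_cosh_mul_gg beta gams lams mus (hg (2 * lam))).const_mul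
    (2 * Real.exp (-(beta * (2 * lam + lams))) * Real.cosh (beta * hf))
  refine ((((hasDerivAt_const r _).add d0).add d4).add d2).congr_deriv ?_
  unfold G0 G1 G2
  simp only [Real.exp_neg]
  field_simp
  ring

theorem hasDerivAt_FF {r : ℝ} (hbeta : beta ≠ 0) (hgams : gams ≠ 0) (hr : 0 < r) :
    HasDerivAt (fun r => FF beta gams lams lamf lam mus muf hs hf eta r)
      (-gams + gams ^ 2 / 2 *
        (G0 beta gams lams lamf lam mus muf hs hf eta r
          + G1 beta gams lams lamf lam mus muf hs hf eta r
          + G2 beta gams lams lamf lam mus muf hs hf eta r)) r := by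
  have hlin : HasDerivAt (fun r : ℝ => -(gams * r)) (-gams) r := by
    simpa using (hasDerivAt_id r).const_mul (-gams)
  refine (hlin.add (((hasDerivAt_ff beta gams lams lamf lam mus muf hs hf eta hgams hr).log
    (ff_pos beta gams lams lamf lam mus muf hs hf eta r).ne').const_mul beta⁻¹)).congr_deriv ?_
  have := (ff_pos beta gams lams lamf lam mus muf hs hf eta r).ne'
  field_simp

end

theorem gap_equation_general (beta gams lams lamf lam mus muf hs hf eta : ℝ) (hbeta : 0 < beta) (hgams : 0 < gams)
    (rb : ℝ) (hrb : 0 < rb)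
    (hmax : ∀ r' : ℝ, 0 ≤ r' → FF beta gams lams lamf lam mus muf hs hf eta r' ≤ FF beta gams lams lamf lam mus muf hs hf eta rb) :
    G0 beta gams lams lamf lam mus muf hs hf eta rb + G1 beta gams lams lamf lam mus muf hs hf eta rb + G2 beta gams lams lamf lam mus muf hs hf eta rb = 2 / gams := by
  have hloc : IsLocalMax (fun r => FF beta gams lams lamf lam mus muf hs hf eta r) rb :=
    IsLocalMaxOn.isLocalMax (IsMaxOn.localize fun r hr => hmax r hr) (Ici_mem_nhds hrb)
  have hcrit := hloc.hasDerivAt_eq_zero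
    (hasDerivAt_FF beta gams lams lamf lam mus muf hs hf eta hbeta.ne' hgams.ne' hrb)
  rw [eq_div_iff hgams.ne']
  refine mul_left_cancel₀ hgams.ne' ?_
  linear_combination 2 * hcrit

/-- gap equation: any strictly positive maximizer `rb` of `F` over
`[0,∞)` satisfies `G_0(rb) + G_1(rb) + G_2(rb) = 2/γ_s`. -/
theorem gap_equation (beta gams lams lamf lam mus muf hs hf eta : ℝ) (hbeta : 0 < beta) (hgams : 0 < gams) (hlams : 0 ≤ lams) (hlamf : 0 ≤ lamf) (hlam : 0 ≤ lam)
    (rb : ℝ) (hrb : 0 < rb)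
    (hmax : ∀ r' : ℝ, 0 ≤ r' → FF beta gams lams lamf lam mus muf hs hf eta r' ≤ FF beta gams lams lamf lam mus muf hs hf eta rb) :
    G0 beta gams lams lamf lam mus muf hs hf eta rb + G1 beta gams lams lamf lam mus muf hs hf eta rb + G2 beta gams lams lamf lam mus muf hs hf eta rb = 2 / gams :=
  gap_equation_general beta gams lams lamf lam mus muf hs hf eta hbeta hgams rb hrb hmax
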